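/- Let p be an idempotent (p ∘ p = p) in a sequential effect algebra. Then the following are equivalent for any element a: (i) a ≤ p; (ii) p ∘ a = a; (iii) a ∘ p = a; (iv) a ∘ p⊥ = 0; (v) p⊥ ∘ a = 0. -/
import Mathlib


universe u

/-- `EAle orth add a b` : the effect-algebra order `a ≤ b` iff `∃ c, a ⊕ c = b`. -/
def EAle {α : Type u} (orth : α → α → Prop) (add : α → α → α) (a b : α) : Prop :=
  ∃ c, orth a c ∧ add a c = b

/-- An effect algebra: partial sum `add` (defined when `orth` holds), zero, complement. -/
structure EffectAlgebra (α : Type u) where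
  orth : α → α → Prop
  add : α → α → α
  zero : α
  compl : α → α
  orth_comm : ∀ a b, orth a b → orth b a
  add_comm' : ∀ a b, orth a b → add a b = add b a
  orth_zero : ∀ a, orth a zero
  add_zero' : ∀ a, add a zero = a
  orth_assoc₁ : ∀ a b c, orth a b → orth (add a b) c → orth b c
  orth_assoc₂ : ∀ a b c, orth a b → orth (add a b) c → orth a (add b c)
  add_assoc' : ∀ a b c, orth a b → orth (add a b) c → add (add a b) c = add a (add b c)
  orth_compl : ∀ a, orth a (compl a)
  add_compl : ∀ a, add a (compl a) = compl zero
  compl_unique : ∀ a b, orth a b → add a b = compl zero → b = compl a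
  orth_one : ∀ a, orth a (compl zero) → a = zero

namespace EffectAlgebra
variable {α : Type u}
/-- The effect-algebra order. -/
def le (E : EffectAlgebra α) : α → α → Prop := EAle E.orth E.add
/-- The unit `1 := 0⊥`. -/
def one (E : EffectAlgebra α) : α := E.compl E.zero
end EffectAlgebra

/-- A sequential effect algebra: an effect algebra with a total product `seq`
satisfying S1–S5. -/
structure SEA (α : Type u) extends EffectAlgebra α where
  seq : α → α → α
  seq_orth : ∀ a b c, orth b c → orth (seq a b) (seq a c)                                -- S1
  seq_add : ∀ a b c, orth b c → seq a (add b c) = add (seq a b) (seq a c)                -- S1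
  one_seq : ∀ a, seq (compl zero) a = a                                                  -- S2
  seq_zero_symm : ∀ a b, seq a b = zero → seq b a = zero                                 -- S3
  comm_compl : ∀ a b, seq a b = seq b a → seq a (compl b) = seq (compl b) a              -- S4
  comm_assoc : ∀ a b c, seq a b = seq b a → seq a (seq b c) = seq (seq a b) c            -- S4
  comm_seq : ∀ a b c, seq c a = seq a c → seq c b = seq b c →
    seq c (seq a b) = seq (seq a b) c                                                    -- S5
  comm_add : ∀ a b c, seq c a = seq a c → seq c b = seq b c → orth a b →
    seq c (add a b) = seq (add a b) c                                                    -- S5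


namespace EffectAlgebra
variable {α : Type u} (E : EffectAlgebra α)

lemma assoc_flip {a b c : α} (hbc : E.orth b c) (h : E.orth a (E.add b c)) :
    E.orth a b ∧ E.orth (E.add a b) c ∧ E.add a (E.add b c) = E.add (E.add a b) c := by
  have hcb := E.orth_comm _ _ hbc
  have h' : E.orth (E.add c b) a := by
    rw [E.add_comm' _ _ hcb]; exact E.orth_comm _ _ h
  have hba : E.orth b a := E.orth_assoc₁ c b a hcb h'
  have hab : E.orth a b := E.orth_comm _ _ hba
  have h2 : E.orth c (E.add b a) := E.orth_assoc₂ c b a hcb h'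
  have hsum : E.orth (E.add a b) c := by
    rw [E.add_comm' _ _ hab]; exact E.orth_comm _ _ h2
  refine ⟨hab, hsum, ?_⟩
  rw [E.add_assoc' a b c hab hsum]

lemma cancel {a b c : α} (hab : E.orth a b) (hac : E.orth a c)
    (h : E.add a b = E.add a c) : b = c := by
  have key : ∀ x, E.orth a x → E.add a x = E.add a b →
      x = E.compl (E.add a (E.compl (E.add a b))) := by
    intro x hax hx
    set d := E.compl (E.add a b) with hd
    have h1 : E.orth (E.add a x) d := hx ▸ E.orth_compl (E.add a b)
    have h2 : E.add (E.add a x) d = E.compl E.zero := by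
      rw [hx]; exact E.add_compl _
    have hxd : E.orth x d := E.orth_assoc₁ a x d hax h1
    have haxd : E.orth a (E.add x d) := E.orth_assoc₂ a x d hax h1
    have h3 : E.add a (E.add x d) = E.compl E.zero := by
      rw [← E.add_assoc' a x d hax h1]; exact h2
    rw [E.add_comm' x d hxd] at h3 haxd
    obtain ⟨had, hsum, heq⟩ := E.assoc_flip (E.orth_comm _ _ hxd) haxd
    exact E.compl_unique _ _ hsum (by rw [← heq]; exact h3)
  rw [key b hab rfl, key c hac h.symm]

lemma compl_compl (a : α) : E.compl (E.compl a) = a := by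
  refine (E.compl_unique (E.compl a) a (E.orth_comm _ _ (E.orth_compl a)) ?_).symm
  rw [E.add_comm' _ _ (E.orth_comm _ _ (E.orth_compl a))]; exact E.add_compl a

lemma eq_zero_of_add_eq_zero {a c : α} (h : E.orth a c) (h0 : E.add a c = E.zero) :
    a = E.zero := by
  have h1 : E.orth (E.add a c) (E.compl E.zero) := by
    rw [h0]; exact E.orth_compl E.zero
  have hc : c = E.zero := E.orth_one c (E.orth_assoc₁ a c _ h h1)
  rw [hc, E.add_zero'] at h0; exact h0

end EffectAlgebra

namespace SEA
variable {α : Type u} (E : SEA α)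

lemma seq_zero (a : α) : E.seq a E.zero = E.zero := by
  have h : E.add (E.seq a E.zero) (E.seq a E.zero) = E.add (E.seq a E.zero) E.zero := by
    rw [E.add_zero']
    conv_rhs => rw [show E.zero = E.add E.zero E.zero from (E.add_zero' E.zero).symm,
      E.seq_add a E.zero E.zero (E.orth_zero E.zero)]
  exact E.toEffectAlgebra.cancel (E.seq_orth a _ _ (E.orth_zero E.zero)) (E.orth_zero _) h

lemma seq_one (a : α) : E.seq a (E.compl E.zero) = a := by
  have h : E.seq a E.zero = E.seq E.zero a := by
    rw [E.seq_zero, E.seq_zero_symm a E.zero (E.seq_zero a)]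
  rw [E.comm_compl a E.zero h, E.one_seq]

lemma seq_split (a b : α) :
    E.orth (E.seq a b) (E.seq a (E.compl b)) ∧
      E.add (E.seq a b) (E.seq a (E.compl b)) = a := by
  refine ⟨E.seq_orth a b (E.compl b) (E.orth_compl b), ?_⟩
  rw [← E.seq_add a b (E.compl b) (E.orth_compl b), E.add_compl, E.seq_one]

end SEA

/-- For an idempotent `p`, the following are equivalent:
`a ≤ p`, `p ∘ a = a`, `a ∘ p = a`, `a ∘ p⊥ = 0`, `p⊥ ∘ a = 0`. -/
theorem sea_le_idem_tfae {α : Type u} (E : SEA α) (p a : α) (hp : E.seq p p = p) :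
    [E.le a p,
     E.seq p a = a,
     E.seq a p = a,
     E.seq a (E.compl p) = E.zero,
     E.seq (E.compl p) a = E.zero].TFAE := by
  set q := E.compl p with hq
  have hpq : E.seq p q = E.zero := by
    obtain ⟨ho, hs⟩ := E.seq_split p p
    rw [hp] at ho hs
    exact E.toEffectAlgebra.cancel ho (E.orth_zero p) (by rw [hs, E.add_zero'])
  have hqp : E.seq q p = E.zero := E.seq_zero_symm p q hpq
  tfae_have 1 → 5 := by
    rintro ⟨c, hac, hsum⟩
    have h := E.seq_add q a c hac
    rw [hsum, hqp] at h
    exact (E.toEffectAlgebra.eq_zero_of_add_eq_zero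
      (E.seq_orth q a c hac) h.symm)
  tfae_have 5 → 4 := fun h => E.seq_zero_symm q a h
  tfae_have 4 → 3 := by
    intro h
    obtain ⟨ho, hs⟩ := E.seq_split a p
    rw [← hq, h, E.add_zero'] at hs
    exact hs
  tfae_have 3 → 2 := by
    intro h3
    obtain ⟨ho, hs⟩ := E.seq_split a p
    rw [← hq] at ho hs
    have h4 : E.seq a q = E.zero := by
      refine E.toEffectAlgebra.cancel (a := E.seq a p) ho (E.orth_zero _) ?_
      rw [hs, E.add_zero', h3]
    have h5 : E.seq q a = E.zero := E.seq_zero_symm a q h4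
    have hcomm : E.seq a q = E.seq q a := by rw [h4, h5]
    have := E.comm_compl a q hcomm
    rw [hq, E.toEffectAlgebra.compl_compl] at this
    rw [← this, h3]
  tfae_have 2 → 1 := by
    intro h2
    obtain ⟨ho, hs⟩ := E.seq_split p a
    rw [h2] at ho hs
    exact ⟨E.seq p (E.compl a), ho, hs⟩
  tfae_finish
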